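/- Let 𝒢_n be a simple, verbose ψ-reduction grammar. Then for each production G_n → χ[σ_1]⋯[σ_w] in 𝒢_n whose right-hand side has closure width w, either χ = N (the non-terminal for de Bruijn indices) or χ = f(α_1,…,α_m) for some non-closure function symbol f of arity m. -/

import Mathlib

mutual
/-- λυ-terms in de Bruijn notation, with explicit closures. -/
inductive LTerm : Type
  | idx : Nat → LTerm
  | lam : LTerm → LTerm
  | app : LTerm → LTerm → LTerm
  | clos : LTerm → LSub → LTerm
  deriving DecidableEq

/-- explicit λυ-substitutions. -/
inductive LSub : Type
  | slash : LTerm → LSub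
  | lift : LSub → LSub
  | shift : LSub
  deriving DecidableEq
end

mutual
/-- natural size of a λυ-term: the number of constructors (|idx n| = n+1). -/
def LTerm.size : LTerm → Nat
  | .idx n => n + 1
  | .lam a => 1 + a.size
  | .app a b => 1 + a.size + b.size
  | .clos a s => 1 + a.size + s.size

/-- natural size of a substitution. -/
def LSub.size : LSub → Nat
  | .slash a => 1 + a.size
  | .lift s => 1 + s.size
  | .shift => 1
end

/-- a λυ-term is pure if it contains no closure; pure terms are exactly the ψ-normal forms. -/
def LTerm.IsPure : LTerm → Prop
  | .idx _ => True
  | .lam a => a.IsPure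
  | .app a b => a.IsPure ∧ b.IsPure
  | .clos _ _ => False

/-- one normal-order (leftmost-outermost) ψ-reduction step. -/
inductive NStep : LTerm → LTerm → Prop
  /-- (App) (ab)[s] → a[s](b[s]) -/
  | appS (a b : LTerm) (s : LSub) :
      NStep (.clos (.app a b) s) (.app (.clos a s) (.clos b s))
  /-- (Lambda) (λa)[s] → λ(a[⇑(s)]) -/
  | lamS (a : LTerm) (s : LSub) :
      NStep (.clos (.lam a) s) (.lam (.clos a (.lift s)))
  /-- (FVar) 0[a/] → a -/
  | fvar (a : LTerm) : NStep (.clos (.idx 0) (.slash a)) a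
  /-- (RVar) (S n)[a/] → n -/
  | rvar (n : Nat) (a : LTerm) : NStep (.clos (.idx (n+1)) (.slash a)) (.idx n)
  /-- (FVarLift) 0[⇑(s)] → 0 -/
  | fvarLift (s : LSub) : NStep (.clos (.idx 0) (.lift s)) (.idx 0)
  /-- (RVarLift) (S n)[⇑(s)] → n[s][↑] -/
  | rvarLift (n : Nat) (s : LSub) :
      NStep (.clos (.idx (n+1)) (.lift s)) (.clos (.clos (.idx n) s) .shift)
  /-- (VarShift) n[↑] → S n -/
  | varShift (n : Nat) : NStep (.clos (.idx n) .shift) (.idx (n+1))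
  /-- reduce under an abstraction -/
  | lamCong {a a' : LTerm} : NStep a a' → NStep (.lam a) (.lam a')
  /-- reduce in the left part of an application -/
  | appLeft {a a' : LTerm} (b : LTerm) : NStep a a' → NStep (.app a b) (.app a' b)
  /-- reduce in the right part of an application, provided the left part is normal -/
  | appRight {b b' : LTerm} (a : LTerm) :
      a.IsPure → NStep b b' → NStep (.app a b) (.app a b')
  /-- reduce in the body of a closure, provided the closure is not itself a ψ-redex,
      i.e. its body is again a closure -/
  | closCong {t t' : LTerm} (s : LSub) :
      (∃ u v, t = LTerm.clos u v) → NStep t t' → NStep (.clos t s) (.clos t' s)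

/-- `NormIn t k` : `t` reaches its ψ-normal form in exactly `k` normal-order
ψ-reduction steps (written t ↓_k). -/
inductive NormIn : LTerm → Nat → Prop
  | base {t : LTerm} : t.IsPure → NormIn t 0
  | step {t t' : LTerm} {k : Nat} : NStep t t' → NormIn t' k → NormIn t (k+1)

/-! ## Regular tree grammars over the λυ signature -/

/-- terms over the ranked alphabet of λυ (terminal symbols 0, S, λ, application,
closure, slash, lift, shift) with variables (non-terminals) in `V`.
Ground terms are `GTerm Empty`. -/
inductive GTerm (V : Type) : Type
  | var : V → GTerm V
  | zero : GTerm V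
  | succ : GTerm V → GTerm V
  | lam : GTerm V → GTerm V
  | app : GTerm V → GTerm V → GTerm V
  | clos : GTerm V → GTerm V → GTerm V
  | slash : GTerm V → GTerm V
  | lift : GTerm V → GTerm V
  | shift : GTerm V
  deriving DecidableEq

/-- `Gen P α t` : the ground term `t` is derivable from the term `α` in the
regular tree grammar with production function `P`. -/
inductive Gen {V : Type} (P : V → Set (GTerm V)) : GTerm V → GTerm Empty → Prop
  | var {X : V} {γ : GTerm V} {t : GTerm Empty} :
      γ ∈ P X → Gen P γ t → Gen P (.var X) t
  | zero : Gen P .zero .zero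
  | succ {a t} : Gen P a t → Gen P (.succ a) (.succ t)
  | lam {a t} : Gen P a t → Gen P (.lam a) (.lam t)
  | app {a b t u} : Gen P a t → Gen P b u → Gen P (.app a b) (.app t u)
  | clos {a b t u} : Gen P a t → Gen P b u → Gen P (.clos a b) (.clos t u)
  | slash {a t} : Gen P a t → Gen P (.slash a) (.slash t)
  | lift {a t} : Gen P a t → Gen P (.lift a) (.lift t)
  | shift : Gen P .shift .shift

/-- the language generated by a term `α` in the grammar with productions `P`. -/
def Lang {V : Type} (P : V → Set (GTerm V)) (α : GTerm V) : Set (GTerm Empty) :=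
  {t | Gen P α t}

/-- derivations (parse trees) of a ground term from a term `α`; a grammar is
unambiguous when such derivations are unique. -/
inductive Parse {V : Type} (P : V → Set (GTerm V)) : GTerm V → GTerm Empty → Type
  | var {X : V} {γ : GTerm V} {t : GTerm Empty} :
      γ ∈ P X → Parse P γ t → Parse P (.var X) t
  | zero : Parse P .zero .zero
  | succ {a t} : Parse P a t → Parse P (.succ a) (.succ t)
  | lam {a t} : Parse P a t → Parse P (.lam a) (.lam t)
  | app {a b t u} : Parse P a t → Parse P b u → Parse P (.app a b) (.app t u)
  | clos {a b t u} : Parse P a t → Parse P b u → Parse P (.clos a b) (.clos t u)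
  | slash {a t} : Parse P a t → Parse P (.slash a) (.slash t)
  | lift {a t} : Parse P a t → Parse P (.lift a) (.lift t)
  | shift : Parse P .shift .shift

/-- a non-terminal `X` is unambiguous if every ground term admits at most one
derivation sequence (equivalently, parse tree) from `X`. -/
def Unambiguous {V : Type} (P : V → Set (GTerm V)) (X : V) : Prop :=
  ∀ t : GTerm Empty, Subsingleton (Parse P (.var X) t)

/-- `Occurs X α` : the non-terminal `X` occurs in the term `α`. -/
def Occurs {V : Type} (X : V) : GTerm V → Prop
  | .var Y => X = Y
  | .zero => False
  | .succ a => Occurs X a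
  | .lam a => Occurs X a
  | .app a b => Occurs X a ∨ Occurs X b
  | .clos a b => Occurs X a ∨ Occurs X b
  | .slash a => Occurs X a
  | .lift a => Occurs X a
  | .shift => False

/-- the head of a term `χ[σ_1]⋯[σ_w]` of closure width `w`, namely `χ`. -/
def headOf {V : Type} : GTerm V → GTerm V
  | .clos a _ => headOf a
  | t => t

/-- the closure width of a term: the largest `w` such that the term has the
form `χ[σ_1]⋯[σ_w]`. -/
def closWidth {V : Type} : GTerm V → Nat
  | .clos a _ => closWidth a + 1
  | _ => 0

/-- a regular tree grammar over the λυ terminal alphabet, with non-terminals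
`V`, axiom `ax` and a finite set of productions for each non-terminal. -/
structure RTG (V : Type) where
  ax : V
  prods : V → Set (GTerm V)
  prods_fin : ∀ X, (prods X).Finite

/-- non-terminal symbols of the ψ-reduction grammar 𝒢_n : the standard
non-terminals T, S, N of the grammar Λ of λυ-terms, plus G_0, …, G_n. -/
inductive NT (n : Nat) : Type
  | T : NT n
  | S : NT n
  | N : NT n
  | G : Fin (n+1) → NT n
  deriving DecidableEq

/-- the productions of the standard regular tree grammar Λ of λυ-terms:
T → N | λT | T T | T[S],  S → T/ | ⇑(S) | ↑,  N → 0 | S N. -/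
def lamProds {n : Nat} : NT n → Set (GTerm (NT n))
  | .T => {GTerm.var (NT.N), GTerm.lam (.var .T), GTerm.app (.var .T) (.var .T),
           GTerm.clos (.var .T) (.var .S)}
  | .S => {GTerm.slash (.var .T), GTerm.lift (.var .S), GTerm.shift}
  | .N => {GTerm.zero, GTerm.succ (.var .N)}
  | .G _ => ∅

/-- encoding of de Bruijn indices as ground terms. -/
def encIdx : Nat → GTerm Empty
  | 0 => .zero
  | n+1 => .succ (encIdx n)

mutual
/-- encoding of λυ-terms as ground terms over the λυ alphabet. -/
def encT : LTerm → GTerm Empty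
  | .idx n => encIdx n
  | .lam a => .lam (encT a)
  | .app a b => .app (encT a) (encT b)
  | .clos a s => .clos (encT a) (encS s)

/-- encoding of λυ-substitutions as ground terms over the λυ alphabet. -/
def encS : LSub → GTerm Empty
  | .slash a => .slash (encT a)
  | .lift s => .lift (encS s)
  | .shift => .shift
end

/-- `IsRG n G` : `G` is a ψ-reduction grammar 𝒢_n : a regular tree grammar
over the λυ alphabet with non-terminals T, S, N, G_0, …, G_n, whose axiom is
G_n, whose productions include those of the grammar Λ of λυ-terms, and such
that each G_k is unambiguous and generates exactly the (encodings of) λυ-terms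
ψ-normalising in k normal-order ψ-reduction steps. -/
structure IsRG (n : Nat) (G : RTG (NT n)) : Prop where
  ax_eq : G.ax = NT.G (Fin.last n)
  lambda_sub : ∀ X : NT n, lamProds X ⊆ G.prods X
  unamb : ∀ k : Fin (n+1), Unambiguous G.prods (NT.G k)
  lang : ∀ k : Fin (n+1),
    Lang G.prods (.var (NT.G k)) = {g | ∃ t : LTerm, NormIn t k ∧ encT t = g}

/-- `IsSimple n G` : the ψ-reduction grammar is simple: every self-referencing
production is a production of Λ or has one of the forms
G_k → λG_k | G_0 G_k | G_k G_0, and every regular (non-self-referencing)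
production G_k → α references only the non-terminals T, S, N, G_0, …, G_{k−1}. -/
structure IsSimple (n : Nat) (G : RTG (NT n)) : Prop where
  selfref : ∀ (X : NT n) (α : GTerm (NT n)), α ∈ G.prods X → Occurs X α →
    α ∈ lamProds X ∨
      ∃ k : Fin (n+1), X = NT.G k ∧
        (α = .lam (.var X) ∨ α = .app (.var (NT.G 0)) (.var X) ∨
          α = .app (.var X) (.var (NT.G 0)))
  regular : ∀ (k : Fin (n+1)) (α : GTerm (NT n)),
    α ∈ G.prods (NT.G k) → ¬ Occurs (NT.G k) α →
      ∀ Y : NT n, Occurs Y α →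
        Y = NT.T ∨ Y = NT.S ∨ Y = NT.N ∨ ∃ j : Fin (n+1), Y = NT.G j ∧ (j : ℕ) < (k : ℕ)

/-- `IsVerbose G` : no production has the form X → G_k[σ_1]⋯[σ_w]. -/
def IsVerbose {n : Nat} (G : RTG (NT n)) : Prop :=
  ∀ (X : NT n) (α : GTerm (NT n)), α ∈ G.prods X →
    ∀ k : Fin (n+1), headOf α ≠ .var (NT.G k)

/-!
If the head of a production `G_k → χ[σ_1]⋯[σ_w]` were the non-terminal `T`, the production would
derive `t[τ_1]⋯[τ_w]` for every λυ-term `t`, e.g. for `t = 0[↑]^(k+1)`. But every ψ-step lowers the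
nesting depth of closures by at most one, so such a term needs at least `k + 1` steps to
normalise. If the head were `S`, the production would derive a ground term headed by `↑`, which
encodes no λυ-term. The head is never a closure by definition, and never some `G_j` by verbosity.
-/

/-- The nesting depth of closures, not counting closures inside substitutions. -/
def LTerm.closDepth : LTerm → ℕ
  | .idx _ => 0
  | .lam a => a.closDepth
  | .app a b => max a.closDepth b.closDepth
  | .clos a _ => a.closDepth + 1

def GTerm.closDepth {V : Type} : GTerm V → ℕ
  | .lam a => a.closDepth
  | .app a b => max a.closDepth b.closDepth
  | .clos a _ => a.closDepth + 1
  | _ => 0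

theorem LTerm.closDepth_eq_zero_of_isPure : ∀ {t : LTerm}, t.IsPure → t.closDepth = 0
  | .idx _, _ => rfl
  | .lam a, h => closDepth_eq_zero_of_isPure (t := a) h
  | .app _ _, ⟨ha, hb⟩ => by
    simp only [closDepth, closDepth_eq_zero_of_isPure ha, closDepth_eq_zero_of_isPure hb, max_self]

theorem NStep.closDepth_le {t t' : LTerm} (h : NStep t t') : t.closDepth ≤ t'.closDepth + 1 := by
  induction h <;> simp only [LTerm.closDepth] at * <;> omega

theorem NormIn.closDepth_le {t : LTerm} {k : ℕ} (h : NormIn t k) : t.closDepth ≤ k := by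
  induction h with
  | base hp => exact (LTerm.closDepth_eq_zero_of_isPure hp).le
  | step hst _ ih => exact hst.closDepth_le.trans (Nat.add_le_add_right ih 1)

theorem closDepth_encT : ∀ t : LTerm, (encT t).closDepth = t.closDepth
  | .idx 0 | .idx (_ + 1) => rfl
  | .lam a => closDepth_encT a
  | .app a b => by simp only [encT, GTerm.closDepth, LTerm.closDepth, closDepth_encT]
  | .clos a _ => by simp only [encT, GTerm.closDepth, LTerm.closDepth, closDepth_encT]

theorem headOf_encT_ne_shift : ∀ t : LTerm, headOf (encT t) ≠ .shift
  | .idx 0 | .idx (_ + 1) | .lam _ | .app _ _ => nofun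
  | .clos a _ => headOf_encT_ne_shift a

theorem headOf_ne_clos {V : Type} (γ a b : GTerm V) : headOf γ ≠ .clos a b := by
  induction γ <;> simp_all [headOf]

def LTerm.shiftedIdx (j : ℕ) : ℕ → LTerm
  | 0 => .idx j
  | r + 1 => .clos (shiftedIdx j r) .shift

theorem LTerm.closDepth_shiftedIdx (j : ℕ) : ∀ r, (shiftedIdx j r).closDepth = r
  | 0 => rfl
  | r + 1 => congrArg (· + 1) (closDepth_shiftedIdx j r)

theorem nstep_shiftedIdx_succ : ∀ r j : ℕ,
    NStep (LTerm.shiftedIdx j (r + 1)) (LTerm.shiftedIdx (j + 1) r)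
  | 0, j => .varShift j
  | r + 1, j => .closCong _ ⟨_, _, rfl⟩ (nstep_shiftedIdx_succ r j)

theorem normIn_shiftedIdx : ∀ r j : ℕ, NormIn (LTerm.shiftedIdx j r) r
  | 0, _ => .base trivial
  | r + 1, j => .step (nstep_shiftedIdx_succ r j) (normIn_shiftedIdx r (j + 1))

section Grammar

variable {V : Type} {P : V → Set (GTerm V)}

theorem Gen.exists_of_forall_var (hP : ∀ X, ∃ d, Gen P (.var X) d) :
    ∀ δ : GTerm V, ∃ d, Gen P δ d
  | .var X => hP X
  | .zero => ⟨_, .zero⟩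
  | .shift => ⟨_, .shift⟩
  | .succ a => let ⟨_, ha⟩ := exists_of_forall_var hP a; ⟨_, .succ ha⟩
  | .lam a => let ⟨_, ha⟩ := exists_of_forall_var hP a; ⟨_, .lam ha⟩
  | .slash a => let ⟨_, ha⟩ := exists_of_forall_var hP a; ⟨_, .slash ha⟩
  | .lift a => let ⟨_, ha⟩ := exists_of_forall_var hP a; ⟨_, .lift ha⟩
  | .app a b =>
    let ⟨_, ha⟩ := exists_of_forall_var hP a
    let ⟨_, hb⟩ := exists_of_forall_var hP b
    ⟨_, .app ha hb⟩
  | .clos a b =>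
    let ⟨_, ha⟩ := exists_of_forall_var hP a
    let ⟨_, hb⟩ := exists_of_forall_var hP b
    ⟨_, .clos ha hb⟩

theorem Gen.exists_of_headOf (hP : ∀ δ : GTerm V, ∃ d, Gen P δ d) {g₀ : GTerm Empty} :
    ∀ {γ : GTerm V}, Gen P (headOf γ) g₀ →
      ∃ g, Gen P γ g ∧ headOf g = headOf g₀ ∧ g₀.closDepth ≤ g.closDepth
  | .clos a b, h => by
    obtain ⟨g, hg, hhead, hdepth⟩ := exists_of_headOf hP (γ := a) h
    obtain ⟨d, hd⟩ := hP b
    exact ⟨.clos g d, .clos hg hd, hhead, hdepth.trans (Nat.le_succ _)⟩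
  | .var _, h | .zero, h | .shift, h | .succ _, h | .lam _, h | .slash _, h | .lift _, h
  | .app _ _, h => ⟨g₀, h, rfl, le_rfl⟩

end Grammar

section LambdaGrammar

variable {n : ℕ} {P : NT n → Set (GTerm (NT n))}

theorem gen_N_encIdx (hΛ : ∀ X, lamProds X ⊆ P X) : ∀ m : ℕ, Gen P (.var .N) (encIdx m)
  | 0 => .var (hΛ .N (by simp [lamProds])) .zero
  | m + 1 => .var (hΛ .N (by simp [lamProds])) (.succ (gen_N_encIdx hΛ m))

mutual
theorem gen_T_encT (hΛ : ∀ X, lamProds X ⊆ P X) : ∀ t : LTerm, Gen P (.var .T) (encT t)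
  | .idx m => .var (hΛ .T (by simp [lamProds])) (gen_N_encIdx hΛ m)
  | .lam a => .var (hΛ .T (by simp [lamProds])) (.lam (gen_T_encT hΛ a))
  | .app a b => .var (hΛ .T (by simp [lamProds])) (.app (gen_T_encT hΛ a) (gen_T_encT hΛ b))
  | .clos a s => .var (hΛ .T (by simp [lamProds])) (.clos (gen_T_encT hΛ a) (gen_S_encS hΛ s))

theorem gen_S_encS (hΛ : ∀ X, lamProds X ⊆ P X) : ∀ s : LSub, Gen P (.var .S) (encS s)
  | .slash a => .var (hΛ .S (by simp [lamProds])) (.slash (gen_T_encT hΛ a))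
  | .lift s => .var (hΛ .S (by simp [lamProds])) (.lift (gen_S_encS hΛ s))
  | .shift => .var (hΛ .S (by simp [lamProds])) .shift
end

end LambdaGrammar

namespace IsRG

variable {n : ℕ} {G : RTG (NT n)}

theorem exists_normIn_of_gen (hRG : IsRG n G) {k : Fin (n + 1)} {g : GTerm Empty}
    (hg : Gen G.prods (.var (NT.G k)) g) : ∃ t, NormIn t k ∧ encT t = g := by
  have hmem : g ∈ Lang G.prods (.var (NT.G k)) := hg
  rwa [hRG.lang k] at hmem

theorem exists_gen (hRG : IsRG n G) : ∀ δ : GTerm (NT n), ∃ d, Gen G.prods δ d := by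
  refine Gen.exists_of_forall_var fun X => ?_
  cases X with
  | T => exact ⟨_, gen_T_encT hRG.lambda_sub (.idx 0)⟩
  | S => exact ⟨_, gen_S_encS hRG.lambda_sub .shift⟩
  | N => exact ⟨_, gen_N_encIdx hRG.lambda_sub 0⟩
  | G k =>
    refine ⟨encT (.shiftedIdx 0 k), ?_⟩
    show _ ∈ Lang G.prods _
    rw [hRG.lang k]
    exact ⟨_, normIn_shiftedIdx k 0, rfl⟩

theorem headOf_ne_var_T (hRG : IsRG n G) {k : Fin (n + 1)} {γ : GTerm (NT n)}
    (hγ : γ ∈ G.prods (NT.G k)) : headOf γ ≠ .var NT.T := by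
  intro hT
  have hdeep := gen_T_encT hRG.lambda_sub (.shiftedIdx 0 (k + 1))
  rw [← hT] at hdeep
  obtain ⟨g, hg, -, hdepth⟩ := Gen.exists_of_headOf hRG.exists_gen hdeep
  obtain ⟨t, ht, rfl⟩ := hRG.exists_normIn_of_gen (.var hγ hg)
  have := ht.closDepth_le
  rw [closDepth_encT, LTerm.closDepth_shiftedIdx, closDepth_encT] at hdepth
  omega

theorem headOf_ne_var_S (hRG : IsRG n G) {k : Fin (n + 1)} {γ : GTerm (NT n)}
    (hγ : γ ∈ G.prods (NT.G k)) : headOf γ ≠ .var NT.S := by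
  intro hS
  have hshift := gen_S_encS hRG.lambda_sub .shift
  rw [← hS] at hshift
  obtain ⟨g, hg, hhead, -⟩ := Gen.exists_of_headOf hRG.exists_gen hshift
  obtain ⟨t, -, rfl⟩ := hRG.exists_normIn_of_gen (.var hγ hg)
  exact headOf_encT_ne_shift t hhead

end IsRG

/-- Let 𝒢_n be a simple, verbose ψ-reduction grammar. Then for each production
G_n → χ[σ_1]⋯[σ_w] whose right-hand side has closure width w, the head χ is
either the non-terminal N for de Bruijn indices, or is built from a
non-closure function symbol (in particular it is not a non-terminal). -/
theorem head_of_axiom_production (n : Nat) (G : RTG (NT n))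
    (hRG : IsRG n G) (hSimple : IsSimple n G) (hVerbose : IsVerbose G)
    (γ : GTerm (NT n)) (hγ : γ ∈ G.prods (NT.G (Fin.last n))) :
    headOf γ = .var NT.N ∨
      ((∀ Y : NT n, headOf γ ≠ .var Y) ∧ ∀ a b : GTerm (NT n), headOf γ ≠ .clos a b) := by
  by_cases hvar : ∃ Y, headOf γ = .var Y
  · obtain ⟨Y, hY⟩ := hvar
    left
    cases Y with
    | N => exact hY
    | T => exact absurd hY (hRG.headOf_ne_var_T hγ)
    | S => exact absurd hY (hRG.headOf_ne_var_S hγ)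
    | G k => exact absurd hY (hVerbose _ γ hγ k)
  · exact .inr ⟨fun Y hY => hvar ⟨Y, hY⟩, headOf_ne_clos γ⟩
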